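/- (Upper bound from the tangent linearization) Let ρ̂ ∈ ℝ_{≥0}^n, and suppose ρ* ≥ 0 satisfies f_i(ρ*) = ρ*_i for every cell i. If ρ̄ ∈ ℝ_{≥0}^n satisfies the tangent linear system ρ̄_i = h̄_i(ρ̄) for every cell i, then ρ̄_i ≥ ρ*_i for every cell i. -/

import Mathlib

/-!
Write `f_i(ρ) = Σ_j (ln 2 / a_ij) φ(u_ij(ρ))` with `φ(x) = 1 / ln(1 + 1/x)`. Since
`φ'(x) = 1 / ((x² + x) ln(1 + 1/x)²)` and `ln(1 + 1/x) ≥ 2 / (2x + 1)` (first term of the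
series of `ln(1 + 1/x)`), the denominator is increasing, so `φ` is concave on `(0, ∞)`. Each
`u_ij` is affine in `ρ` and positive for `ρ ≥ 0`, hence `f ≤ h̄` on the nonnegative orthant.

Writing `h̄(ρ) = q + Dρ` with `D ≥ 0` and `q = h̄(0) ≥ f(0) > 0`, we get `ρ* ≤ q + Dρ*` and
`ρ̄ = q + Dρ̄`. Let `t = min_i (ρ̄_i - ρ*_i) / ρ̄_i`, attained at `m`. From `t ρ̄ ≤ ρ̄ - ρ*`,
`t ρ̄_m = ρ̄_m - ρ*_m ≥ (D(ρ̄ - ρ*))_m ≥ t (Dρ̄)_m = t (ρ̄_m - q_m)`, so `t q_m ≥ 0` and `t ≥ 0`.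
-/

open Real Set Finset

theorem two_div_le_log_one_add_one_div {x : ℝ} (hx : 0 < x) :
    2 / (2 * x + 1) ≤ log (1 + 1 / x) := by
  have h := le_hasSum (hasSum_log_one_add_inv hx) 0 fun k _ => by positivity
  simpa [one_div, div_eq_mul_inv] using h

theorem hasDerivAt_log_one_add_one_div {x : ℝ} (hx : 0 < x) :
    HasDerivAt (fun y => log (1 + 1 / y)) (-1 / (x ^ 2 + x)) x := by
  have h := ((hasDerivAt_inv hx.ne').const_add 1).log (by positivity)
  simp only [one_div] at h ⊢
  convert h using 1
  field_simp

theorem monotoneOn_mul_log_one_add_one_div_sq :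
    MonotoneOn (fun x => (x ^ 2 + x) * log (1 + 1 / x) ^ 2) (Ioi 0) := by
  have hderiv : ∀ x ∈ Ioi (0 : ℝ), HasDerivAt (fun x => (x ^ 2 + x) * log (1 + 1 / x) ^ 2)
      (log (1 + 1 / x) * ((2 * x + 1) * log (1 + 1 / x) - 2)) x := by
    intro x hx
    have hx : 0 < x := hx
    refine (((hasDerivAt_pow 2 x).add (hasDerivAt_id' x)).mul
      ((hasDerivAt_log_one_add_one_div hx).pow 2)).congr_deriv ?_
    simp only [Pi.pow_apply, Pi.add_apply]
    field_simp
    ring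
  refine monotoneOn_of_hasDerivWithinAt_nonneg (convex_Ioi 0)
    (fun x hx => (hderiv x hx).continuousAt.continuousWithinAt)
    (fun x hx => (hderiv x (interior_subset hx)).hasDerivWithinAt) fun x hx => ?_
  have hx : 0 < x := interior_subset hx
  have hlog := two_div_le_log_one_add_one_div hx
  have hlog_nonneg : 0 ≤ log (1 + 1 / x) := (by positivity : (0 : ℝ) ≤ 2 / (2 * x + 1)).trans hlog
  rw [div_le_iff₀' (by positivity)] at hlog
  exact mul_nonneg hlog_nonneg (by linarith)

theorem ConcaveOn.le_add_mul_sub_of_hasDerivAt {S : Set ℝ} {f : ℝ → ℝ} {f' x y : ℝ}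
    (hf : ConcaveOn ℝ S f) (hx : x ∈ S) (hy : y ∈ S) (hf' : HasDerivAt f f' x) :
    f y ≤ f x + f' * (y - x) := by
  rcases lt_trichotomy x y with hxy | rfl | hyx
  · have h := hf.slope_le_of_hasDerivAt hx hy hxy hf'
    rw [slope_def_field, div_le_iff₀ (sub_pos.2 hxy)] at h
    linarith
  · simp
  · have h := hf.le_slope_of_hasDerivAt hy hx hyx hf'
    rw [slope_def_field, le_div_iff₀ (sub_pos.2 hyx)] at h
    linarith

theorem le_of_le_affine_of_eq_affine {ι : Type*} [Finite ι] {s : ι → Finset ι} {D : ι → ι → ℝ}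
    {q x y : ι → ℝ} (hD : ∀ i, ∀ k ∈ s i, 0 ≤ D i k) (hq : ∀ i, 0 < q i)
    (hy_nonneg : ∀ i, 0 ≤ y i) (hy : ∀ i, y i = q i + ∑ k ∈ s i, D i k * y k)
    (hx : ∀ i, x i ≤ q i + ∑ k ∈ s i, D i k * x k) : x ≤ y := by
  intro i
  have hy_pos : ∀ i, 0 < y i := fun i => (hy i).symm ▸
    add_pos_of_pos_of_nonneg (hq i) (sum_nonneg fun k hk => mul_nonneg (hD i k hk) (hy_nonneg k))
  have : Nonempty ι := ⟨i⟩
  obtain ⟨m, hm⟩ := Finite.exists_min fun k => (y k - x k) / y k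
  set t := (y m - x m) / y m
  have ht : ∀ k, t * y k ≤ y k - x k := fun k => (le_div_iff₀ (hy_pos k)).1 (hm k)
  have ht_nonneg : 0 ≤ t := by
    refine nonneg_of_mul_nonneg_left ?_ (hq m)
    have hsum : t * ∑ k ∈ s m, D m k * y k ≤ ∑ k ∈ s m, D m k * y k - ∑ k ∈ s m, D m k * x k := by
      rw [mul_sum, ← sum_sub_distrib]
      gcongr with k hk
      rw [mul_left_comm, ← mul_sub]
      exact mul_le_mul_of_nonneg_left (ht k) (hD m k hk)
    calc 0 ≤ y m - x m - (∑ k ∈ s m, D m k * y k - ∑ k ∈ s m, D m k * x k) := by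
          linarith [hy m, hx m]
      _ ≤ t * y m - t * ∑ k ∈ s m, D m k * y k := by
          rw [div_mul_cancel₀ _ (hy_pos m).ne']; linarith
      _ = t * q m := by rw [← mul_sub, hy m, add_sub_cancel_right]
  exact sub_nonneg.1 ((mul_nonneg ht_nonneg (hy_pos i).le).trans (ht i))

-- `φ(x) = 1 / ln(1 + 1/x)`, so that the load of pixel `j` is `(ln 2 / a_ij) φ(u_ij)`.
noncomputable def invCapacity (x : ℝ) : ℝ := (log (1 + 1 / x))⁻¹

-- `φ'`, written in the shape in which the coefficients `D_ik` are given.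
noncomputable def invCapacityDeriv (x : ℝ) : ℝ := 1 / (log (1 + 1 / x) ^ 2 * x ^ 2 * (1 + 1 / x))

theorem log_one_add_one_div_pos {x : ℝ} (hx : 0 < x) : 0 < log (1 + 1 / x) :=
  log_pos (by simp [hx])

theorem invCapacity_pos {x : ℝ} (hx : 0 < x) : 0 < invCapacity x :=
  inv_pos.2 (log_one_add_one_div_pos hx)

theorem invCapacityDeriv_nonneg {x : ℝ} (hx : 0 < x) : 0 ≤ invCapacityDeriv x := by
  have := log_one_add_one_div_pos hx
  unfold invCapacityDeriv
  positivity

theorem hasDerivAt_invCapacity {x : ℝ} (hx : 0 < x) :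
    HasDerivAt invCapacity (invCapacityDeriv x) x := by
  have hL := log_one_add_one_div_pos hx
  refine ((hasDerivAt_log_one_add_one_div hx).inv hL.ne').congr_deriv ?_
  unfold invCapacityDeriv
  field_simp

theorem antitoneOn_invCapacityDeriv : AntitoneOn invCapacityDeriv (Ioi 0) := by
  intro x hx y hy hxy
  have hx : 0 < x := hx
  have hy : 0 < y := hy
  have hform : ∀ z : ℝ, 0 < z → invCapacityDeriv z = 1 / ((z ^ 2 + z) * log (1 + 1 / z) ^ 2) := by
    intro z hz
    unfold invCapacityDeriv
    congr 1
    field_simp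
  have := log_one_add_one_div_pos hx
  rw [hform x hx, hform y hy]
  exact one_div_le_one_div_of_le (by positivity) (monotoneOn_mul_log_one_add_one_div_sq hx hy hxy)

theorem concaveOn_invCapacity : ConcaveOn ℝ (Ioi 0) invCapacity := by
  refine AntitoneOn.concaveOn_of_deriv (convex_Ioi 0)
    (fun x hx => (hasDerivAt_invCapacity hx).continuousAt.continuousWithinAt) ?_ ?_
  · exact fun x hx =>
      (hasDerivAt_invCapacity (interior_subset hx)).differentiableAt.differentiableWithinAt
  · rw [interior_Ioi]
    intro x hx y hy hxy
    rw [(hasDerivAt_invCapacity hx).deriv, (hasDerivAt_invCapacity hy).deriv]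
    exact antitoneOn_invCapacityDeriv hx hy hxy

theorem invCapacity_le_tangent {v w : ℝ} (hv : 0 < v) (hw : 0 < w) :
    invCapacity w ≤ invCapacity v + invCapacityDeriv v * (w - v) :=
  concaveOn_invCapacity.le_add_mul_sub_of_hasDerivAt hv hw (hasDerivAt_invCapacity hv)

theorem one_div_mul_logb_two (A X : ℝ) :
    1 / (A * logb 2 X) = log 2 / A * (log X)⁻¹ := by
  rw [logb, one_div, mul_inv, inv_div, div_eq_mul_inv, div_eq_mul_inv]
  ring

section Cell

/- A single cell `i`: `s` is the set of the other cells and `b k j`, `c j`, `a j` stand for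
`b_ikj`, `c_ij`, `a_ij`. -/

variable {κ P : Type*} (s : Finset κ) (b : κ → P → ℝ) (c : P → ℝ) (J : Finset P) (a : P → ℝ)

def interference (ρ : κ → ℝ) (j : P) : ℝ := ∑ k ∈ s, b k j * ρ k + c j

noncomputable def cellLoad (ρ : κ → ℝ) : ℝ :=
  ∑ j ∈ J, 1 / (a j * logb 2 (1 + 1 / interference s b c ρ j))

noncomputable def cellLoadPartial (ρ : κ → ℝ) (k : κ) : ℝ :=
  log 2 * ∑ j ∈ J, b k j / a j * invCapacityDeriv (interference s b c ρ j)

variable {s b c J a}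

theorem interference_pos {ρ : κ → ℝ} {j : P} (hc : 0 < c j) (hb : ∀ k ∈ s, 0 ≤ b k j)
    (hρ : ∀ k ∈ s, 0 ≤ ρ k) : 0 < interference s b c ρ j :=
  add_pos_of_nonneg_of_pos (sum_nonneg fun k hk => mul_nonneg (hb k hk) (hρ k hk)) hc

theorem interference_sub (ρ ρ' : κ → ℝ) (j : P) :
    interference s b c ρ j - interference s b c ρ' j = ∑ k ∈ s, b k j * (ρ k - ρ' k) := by
  simp only [interference, add_sub_add_right_eq_sub, ← sum_sub_distrib, mul_sub]

theorem cellLoad_eq (ρ : κ → ℝ) :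
    cellLoad s b c J a ρ = ∑ j ∈ J, log 2 / a j * invCapacity (interference s b c ρ j) := by
  simp only [cellLoad, one_div_mul_logb_two, invCapacity]

theorem cellLoad_pos (hJ : J.Nonempty) (ha : ∀ j ∈ J, 0 < a j) (hc : ∀ j ∈ J, 0 < c j)
    (hb : ∀ k ∈ s, ∀ j ∈ J, 0 ≤ b k j) {ρ : κ → ℝ} (hρ : ∀ k ∈ s, 0 ≤ ρ k) :
    0 < cellLoad s b c J a ρ := by
  rw [cellLoad_eq]
  refine sum_pos (fun j hj => ?_) hJ
  have := ha j hj
  have := invCapacity_pos (interference_pos (hc j hj) (fun k hk => hb k hk j hj) hρ)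
  positivity

theorem cellLoadPartial_nonneg (ha : ∀ j ∈ J, 0 < a j) (hc : ∀ j ∈ J, 0 < c j)
    (hb : ∀ k ∈ s, ∀ j ∈ J, 0 ≤ b k j) {ρ : κ → ℝ} (hρ : ∀ k ∈ s, 0 ≤ ρ k) {k : κ}
    (hk : k ∈ s) : 0 ≤ cellLoadPartial s b c J a ρ k := by
  refine mul_nonneg (log_nonneg one_le_two) (sum_nonneg fun j hj => ?_)
  have := ha j hj
  have := hb k hk j hj
  have := invCapacityDeriv_nonneg (interference_pos (hc j hj) (fun k hk => hb k hk j hj) hρ)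
  positivity

theorem sum_cellLoadPartial_mul_sub (ρ ρ' : κ → ℝ) :
    ∑ k ∈ s, cellLoadPartial s b c J a ρ' k * (ρ k - ρ' k) =
      ∑ j ∈ J, log 2 / a j * (invCapacityDeriv (interference s b c ρ' j) *
        (interference s b c ρ j - interference s b c ρ' j)) := by
  simp only [cellLoadPartial, interference_sub, mul_sum, sum_mul]
  rw [sum_comm]
  refine sum_congr rfl fun j _ => sum_congr rfl fun k _ => ?_
  ring

theorem cellLoad_le_tangent (ha : ∀ j ∈ J, 0 < a j) (hc : ∀ j ∈ J, 0 < c j)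
    (hb : ∀ k ∈ s, ∀ j ∈ J, 0 ≤ b k j) {ρ ρ' : κ → ℝ} (hρ : ∀ k ∈ s, 0 ≤ ρ k)
    (hρ' : ∀ k ∈ s, 0 ≤ ρ' k) :
    cellLoad s b c J a ρ ≤
      cellLoad s b c J a ρ' + ∑ k ∈ s, cellLoadPartial s b c J a ρ' k * (ρ k - ρ' k) := by
  rw [sum_cellLoadPartial_mul_sub, cellLoad_eq, cellLoad_eq, ← sum_add_distrib]
  refine sum_le_sum fun j hj => ?_
  rw [← mul_add]
  have hbj : ∀ k ∈ s, 0 ≤ b k j := fun k hk => hb k hk j hj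
  exact mul_le_mul_of_nonneg_left (invCapacity_le_tangent (interference_pos (hc j hj) hbj hρ')
    (interference_pos (hc j hj) hbj hρ)) (div_nonneg (log_nonneg one_le_two) (ha j hj).le)

end Cell

theorem stmt_19_general
    (n : ℕ)
    (J : Fin n → Finset ℕ) (hJ : ∀ i, (J i).Nonempty)
    (a c : Fin n → ℕ → ℝ) (b : Fin n → Fin n → ℕ → ℝ)
    (ha : ∀ i, ∀ j ∈ J i, 0 < a i j)
    (hc : ∀ i, ∀ j ∈ J i, 0 < c i j)
    (hb : ∀ i k, k ≠ i → ∀ j ∈ J i, 0 < b i k j)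
    (f : Fin n → (Fin n → ℝ) → ℝ)
    (hf : ∀ i ρ, f i ρ =
      ∑ j ∈ J i, 1 / (a i j * Real.logb 2
        (1 + 1 / (∑ k ∈ Finset.univ.erase i, b i k j * ρ k + c i j))))
    (ρhat : Fin n → ℝ) (hρhat : ∀ i, 0 ≤ ρhat i)
    (ρstar : Fin n → ℝ) (hρstar : ∀ i, 0 ≤ ρstar i)
    (hfix : ∀ i, f i ρstar = ρstar i)
    (u : Fin n → ℕ → ℝ)
    (hu : ∀ i j, u i j = ∑ k ∈ Finset.univ.erase i, b i k j * ρhat k + c i j)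
    (D : Fin n → Fin n → ℝ)
    (hD : ∀ i k, D i k = Real.log 2 * ∑ j ∈ J i, (b i k j / a i j) *
      (1 / ((Real.log (1 + 1 / u i j)) ^ 2 * (u i j) ^ 2 * (1 + 1 / u i j))))
    (hbar : Fin n → (Fin n → ℝ) → ℝ)
    (hhbar : ∀ i ρ, hbar i ρ =
      f i ρhat + ∑ k ∈ Finset.univ.erase i, D i k * (ρ k - ρhat k))
    (ρbar : Fin n → ℝ) (hρbar : ∀ i, 0 ≤ ρbar i)
    (hfixbar : ∀ i, hbar i ρbar = ρbar i) :
    ∀ i, ρstar i ≤ ρbar i := by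
  have hb' : ∀ i, ∀ k ∈ univ.erase i, ∀ j ∈ J i, 0 ≤ b i k j :=
    fun i k hk j hj => (hb i k (ne_of_mem_erase hk) j hj).le
  have hf_eq : ∀ i ρ, f i ρ = cellLoad (univ.erase i) (b i) (c i) (J i) (a i) ρ := hf
  have hD_eq : ∀ i k, D i k = cellLoadPartial (univ.erase i) (b i) (c i) (J i) (a i) ρhat k :=
    fun i k => by simp only [hD, hu]; rfl
  have hf_le : ∀ i ρ, 0 ≤ ρ → f i ρ ≤ hbar i ρ := by
    intro i ρ hρ
    rw [hhbar, hf_eq, hf_eq]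
    simp only [hD_eq]
    exact cellLoad_le_tangent (ha i) (hc i) (hb' i) (fun k _ => hρ k) (fun k _ => hρhat k)
  have hbar_affine : ∀ i ρ, hbar i ρ = hbar i 0 + ∑ k ∈ univ.erase i, D i k * ρ k := by
    intro i ρ
    rw [hhbar, hhbar, add_assoc, ← sum_add_distrib]
    simp only [Pi.zero_apply, zero_sub]
    exact congrArg _ (sum_congr rfl fun k _ => by ring)
  have hq : ∀ i, 0 < hbar i 0 := fun i => (hf_le i 0 le_rfl).trans_lt'
    (hf_eq i 0 ▸ cellLoad_pos (hJ i) (ha i) (hc i) (hb' i) fun _ _ => le_rfl)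
  have hD_nonneg : ∀ i, ∀ k ∈ univ.erase i, 0 ≤ D i k := fun i k hk => by
    rw [hD_eq]
    exact cellLoadPartial_nonneg (ha i) (hc i) (hb' i) (fun k _ => hρhat k) hk
  refine le_of_le_affine_of_eq_affine hD_nonneg hq hρbar (fun i => ?_) (fun i => ?_)
  · rw [← hbar_affine, hfixbar]
  · rw [← hbar_affine, ← hfix i]
    exact hf_le i ρstar hρstar

/-- Upper bound from the tangent linearization at `ρ̂`: any nonnegative
solution `ρ̄` of the tangent linear system `ρ = h̄(ρ)` dominates the
fixed point `ρ*` of the load-coupling system componentwise. -/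
theorem stmt_19
    (n : ℕ) (hn : 2 ≤ n)
    (J : Fin n → Finset ℕ) (hJ : ∀ i, (J i).Nonempty)
    (a c : Fin n → ℕ → ℝ) (b : Fin n → Fin n → ℕ → ℝ)
    (ha : ∀ i, ∀ j ∈ J i, 0 < a i j)
    (hc : ∀ i, ∀ j ∈ J i, 0 < c i j)
    (hb : ∀ i k, k ≠ i → ∀ j ∈ J i, 0 < b i k j)
    (f : Fin n → (Fin n → ℝ) → ℝ)
    (hf : ∀ i ρ, f i ρ =
      ∑ j ∈ J i, 1 / (a i j * Real.logb 2
        (1 + 1 / (∑ k ∈ Finset.univ.erase i, b i k j * ρ k + c i j))))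
    (ρhat : Fin n → ℝ) (hρhat : ∀ i, 0 ≤ ρhat i)
    (ρstar : Fin n → ℝ) (hρstar : ∀ i, 0 ≤ ρstar i)
    (hfix : ∀ i, f i ρstar = ρstar i)
    (u : Fin n → ℕ → ℝ)
    (hu : ∀ i j, u i j = ∑ k ∈ Finset.univ.erase i, b i k j * ρhat k + c i j)
    (D : Fin n → Fin n → ℝ)
    (hD : ∀ i k, D i k = Real.log 2 * ∑ j ∈ J i, (b i k j / a i j) *
      (1 / ((Real.log (1 + 1 / u i j)) ^ 2 * (u i j) ^ 2 * (1 + 1 / u i j))))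
    (hbar : Fin n → (Fin n → ℝ) → ℝ)
    (hhbar : ∀ i ρ, hbar i ρ =
      f i ρhat + ∑ k ∈ Finset.univ.erase i, D i k * (ρ k - ρhat k))
    (ρbar : Fin n → ℝ) (hρbar : ∀ i, 0 ≤ ρbar i)
    (hfixbar : ∀ i, hbar i ρbar = ρbar i) :
    ∀ i, ρstar i ≤ ρbar i :=
  stmt_19_general n J hJ a c b ha hc hb f hf ρhat hρhat ρstar hρstar hfix u hu D hD hbar hhbar ρbar
    hρbar hfixbar
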